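/- For A₁,…,Aₙ ∈ ℳⁿ, one has D(A₁,…,Aₙ) > 0 if and only if dim(P(A_{i₁}) + … + P(A_{i_k})) ≥ k for each choice of indices 1 ≤ i₁ < … < i_k ≤ n and for all k ∈ {1,…,n}. -/

import Mathlib

/-!
Write each `Aᵢ = BᵢᵀBᵢ`. The mixed discriminant is multilinear and equals `det[x₁ … xₙ]² / n!`
on rank-one matrices `xᵢxᵢᵀ`, so expanding `Aᵢ = Σₖ bᵢₖbᵢₖᵀ` over the rows `bᵢₖ` of `Bᵢ` gives
`n! · D(A) = Σ_g det[b₁g₁ … bₙgₙ]²`. Hence `D(A) > 0` iff one can pick a row of each `Bᵢ` so that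
the picked rows are linearly independent. As `P(Aᵢ)` is spanned by the rows of `Bᵢ`, Rado's theorem
on independent transversals turns this into the dimension condition.

Rado's theorem is proved by deleting vectors one at a time: if `x ≠ y` lie in `Sᵢ` and deleting
either one violates the condition, at sets `P` and `Q` of indices, then the modularity of `dim` on
`span S(P) + span S(Q)` and `span S(P) ∩ span S(Q)` contradicts the condition for `P ∪ Q` and
`(P ∩ Q) \ {i}`.
-/

/-- The mixed discriminant of `n` real `n × n` matrices:
`D(A₁,…,Aₙ) = (1/n!) Σ_{σ ∈ S(n)} det(M_σ)`, where the `j`-th column of `M_σ`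
is the `j`-th column of `A_{σ(j)}`. -/
noncomputable def mixedDisc (n : ℕ) (A : Fin n → Matrix (Fin n) (Fin n) ℝ) : ℝ :=
  ((n.factorial : ℝ))⁻¹ *
    ∑ σ : Equiv.Perm (Fin n), (Matrix.of fun i j => A (σ j) i j).det

open Matrix Finset Submodule Module Function Equiv
open scoped Nat

namespace Finset

variable {ι α : Type*} [DecidableEq ι] [DecidableEq α]

theorem biUnion_update_of_notMem {s : Finset ι} {i : ι} (hi : i ∉ s) (S : ι → Finset α)
    (T : Finset α) : s.biUnion (update S i T) = s.biUnion S :=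
  biUnion_congr rfl fun _ hj => update_of_ne (ne_of_mem_of_not_mem hj hi) _ _

theorem update_erase_apply_subset (S : ι → Finset α) (i : ι) (x : α) (j : ι) :
    update S i ((S i).erase x) j ⊆ S j := by
  rcases eq_or_ne j i with rfl | hji
  · simpa using erase_subset x (S j)
  · simp [hji]

theorem sum_card_update_erase_lt [Fintype ι] {S : ι → Finset α} {i : ι} {x : α} (hx : x ∈ S i) :
    ∑ j, (update S i ((S i).erase x) j).card < ∑ j, (S j).card :=
  sum_lt_sum (fun j _ => card_le_card (update_erase_apply_subset S i x j))
    ⟨i, mem_univ i, by simpa using card_erase_lt_of_mem hx⟩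

theorem biUnion_union_subset_union_biUnion_update_erase {P Q : Finset ι} {i : ι} (hiP : i ∈ P)
    (hiQ : i ∈ Q) (S : ι → Finset α) {x y : α} (hxy : x ≠ y) :
    (P ∪ Q).biUnion S ⊆
      P.biUnion (update S i ((S i).erase x)) ∪ Q.biUnion (update S i ((S i).erase y)) := by
  intro z hz
  simp only [mem_biUnion, mem_union] at hz ⊢
  obtain ⟨j, hj, hz⟩ := hz
  rcases eq_or_ne j i with rfl | hji
  · rcases eq_or_ne z x with rfl | hzx
    · exact Or.inr ⟨j, hiQ, by simp [hz, hxy]⟩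
    · exact Or.inl ⟨j, hiP, by simp [hz, hzx]⟩
  · rcases hj with hj | hj
    · exact Or.inl ⟨j, hj, by simpa [hji] using hz⟩
    · exact Or.inr ⟨j, hj, by simpa [hji] using hz⟩

theorem biUnion_erase_subset_biUnion_update {s : Finset ι} (i : ι) (S : ι → Finset α)
    (T : Finset α) : (s.erase i).biUnion S ⊆ s.biUnion (update S i T) := by
  intro z hz
  simp only [mem_biUnion, mem_erase] at hz ⊢
  obtain ⟨j, ⟨hji, hj⟩, hz⟩ := hz
  exact ⟨j, hj, by simpa [hji] using hz⟩

end Finset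

section Rado

variable (K : Type*) {V ι : Type*} [Field K] [AddCommGroup V] [Module K V] [DecidableEq V]

def RadoCondition (S : ι → Finset V) : Prop :=
  ∀ s : Finset ι, s.card ≤ finrank K (span K (s.biUnion S : Set V))

variable {K} {S : ι → Finset V}

theorem RadoCondition.nonempty (hS : RadoCondition K S) (i : ι) : (S i).Nonempty :=
  nonempty_iff_ne_empty.2 fun hi => by simpa [hi] using hS {i}

theorem LinearIndependent.card_le_finrank_span_biUnion {v : ι → V} (hv : LinearIndependent K v)
    (hvS : ∀ i, v i ∈ S i) (s : Finset ι) :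
    s.card ≤ finrank K (span K (s.biUnion S : Set V)) :=
  calc s.card = Fintype.card s := (Fintype.card_coe s).symm
    _ ≤ (Set.range fun i : s => v i).finrank K :=
      linearIndependent_iff_card_le_finrank_span.1 (hv.comp _ Subtype.val_injective)
    _ ≤ finrank K (span K (s.biUnion S : Set V)) :=
      finrank_mono (span_mono (Set.range_subset_iff.2 fun i => mem_biUnion.2 ⟨i, i.2, hvS i⟩))

variable [DecidableEq ι]

theorem RadoCondition.update_erase_or (hS : RadoCondition K S) (i : ι) {x y : V} (hxy : x ≠ y) :
    RadoCondition K (update S i ((S i).erase x)) ∨ RadoCondition K (update S i ((S i).erase y)) := by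
  by_contra! h
  simp only [RadoCondition, not_forall, not_le] at h
  obtain ⟨⟨P, hP⟩, ⟨Q, hQ⟩⟩ := h
  have hiP : i ∈ P := by
    by_contra hiP
    exact (hS P).not_gt (by rwa [biUnion_update_of_notMem hiP] at hP)
  have hiQ : i ∈ Q := by
    by_contra hiQ
    exact (hS Q).not_gt (by rwa [biUnion_update_of_notMem hiQ] at hQ)
  set U := span K (P.biUnion (update S i ((S i).erase x)) : Set V)
  set W := span K (Q.biUnion (update S i ((S i).erase y)) : Set V)
  have hsup : span K ((P ∪ Q).biUnion S : Set V) ≤ U ⊔ W := by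
    rw [← span_union, ← coe_union]
    exact span_mono (coe_subset.2 (biUnion_union_subset_union_biUnion_update_erase hiP hiQ S hxy))
  have hinf : span K (((P ∩ Q).erase i).biUnion S : Set V) ≤ U ⊓ W :=
    le_inf
      (span_mono (coe_subset.2 ((biUnion_erase_subset_biUnion_update i S _).trans
        (biUnion_subset_biUnion_of_subset_left _ inter_subset_left))))
      (span_mono (coe_subset.2 ((biUnion_erase_subset_biUnion_update i S _).trans
        (biUnion_subset_biUnion_of_subset_left _ inter_subset_right))))
  have hunion := (hS (P ∪ Q)).trans (finrank_mono hsup)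
  have hinter := (hS _).trans (finrank_mono hinf)
  have hmodular := finrank_sup_add_finrank_inf_eq U W
  have hcard := card_union_add_card_inter P Q
  have hcard_erase := card_erase_of_mem (mem_inter.2 ⟨hiP, hiQ⟩)
  have hcard_pos := card_pos.2 ⟨i, mem_inter.2 ⟨hiP, hiQ⟩⟩
  omega

theorem RadoCondition.exists_linearIndependent [Fintype ι] (hS : RadoCondition K S) :
    ∃ v : ι → V, (∀ i, v i ∈ S i) ∧ LinearIndependent K v := by
  induction hN : ∑ i, (S i).card using Nat.strong_induction_on generalizing S with
  | _ N ih =>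
  by_cases hpair : ∃ i, ∃ x ∈ S i, ∃ y ∈ S i, x ≠ y
  · obtain ⟨i, x, hx, y, hy, hxy⟩ := hpair
    have shrink : ∀ z ∈ S i, RadoCondition K (update S i ((S i).erase z)) →
        ∃ v : ι → V, (∀ i, v i ∈ S i) ∧ LinearIndependent K v := by
      intro z hz hSz
      obtain ⟨v, hv, hli⟩ := ih _ (hN ▸ sum_card_update_erase_lt hz) hSz rfl
      exact ⟨v, fun j => update_erase_apply_subset S i z j (hv j), hli⟩
    rcases hS.update_erase_or i hxy with h | h
    exacts [shrink x hx h, shrink y hy h]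
  · push Not at hpair
    have hsingleton : ∀ i, ∃ a, S i = {a} := fun i => by
      obtain ⟨a, ha⟩ := hS.nonempty i
      exact ⟨a, eq_singleton_iff_unique_mem.2 ⟨ha, fun b hb => hpair i b hb a ha⟩⟩
    choose v hv using hsingleton
    obtain rfl : S = fun i => {v i} := funext hv
    refine ⟨v, fun i => mem_singleton_self _, ?_⟩
    have := hS univ
    rwa [biUnion_singleton, coe_image, coe_univ, Set.image_univ, card_univ,
      ← Set.finrank, ← linearIndependent_iff_card_le_finrank_span] at this

theorem radoCondition_iff_exists_linearIndependent [Fintype ι] :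
    RadoCondition K S ↔ ∃ v : ι → V, (∀ i, v i ∈ S i) ∧ LinearIndependent K v :=
  ⟨RadoCondition.exists_linearIndependent, fun ⟨_, hvS, hv⟩ => hv.card_le_finrank_span_biUnion hvS⟩

end Rado

theorem Matrix.range_toLin'_transpose_mul_self {m n R : Type*} [Fintype m] [Fintype n]
    [DecidableEq m] [DecidableEq n] [Field R] [LinearOrder R] [IsStrictOrderedRing R]
    (B : Matrix m n R) : LinearMap.range (toLin' (Bᵀ * B)) = span R (Set.range B.row) := by
  have hle : LinearMap.range (toLin' (Bᵀ * B)) ≤ LinearMap.range (toLin' Bᵀ) := by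
    rw [toLin'_mul]
    exact LinearMap.range_comp_le_range _ _
  rw [eq_of_le_of_finrank_eq hle ((rank_transpose_mul_self B).trans (rank_transpose B).symm),
    range_toLin']
  rfl

open scoped MatrixOrder in
theorem Matrix.PosSemidef.exists_eq_transpose_mul_self {n : Type*} [Fintype n] {A : Matrix n n ℝ}
    (hA : A.PosSemidef) : ∃ B : Matrix n n ℝ, A = Bᵀ * B := by
  classical
  obtain ⟨B, hB⟩ := CStarAlgebra.nonneg_iff_eq_star_mul_self.mp hA.nonneg
  exact ⟨B, by simpa [star_eq_conjTranspose] using hB⟩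

theorem Matrix.transpose_mul_self_eq_sum_vecMulVec {m n R : Type*} [Fintype m] [CommSemiring R]
    (B : Matrix m n R) : Bᵀ * B = ∑ k, vecMulVec (B k) (B k) := by
  ext i j; simp [mul_apply, vecMulVec_apply, Matrix.sum_apply]

noncomputable def mixedDiscMultilinear (n : ℕ) :
    MultilinearMap ℝ (fun _ : Fin n => Matrix (Fin n) (Fin n) ℝ) ℝ :=
  (n ! : ℝ)⁻¹ • ∑ σ : Perm (Fin n),
    ((detRowAlternating : (Fin n → ℝ) [⋀^Fin n]→ₗ[ℝ] ℝ).toMultilinearMap.compLinearMap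
      fun j => LinearMap.proj j ∘ₗ (transposeLinearEquiv (Fin n) (Fin n) ℝ ℝ).toLinearMap).domDomCongr
        σ

theorem mixedDiscMultilinear_apply {n : ℕ} (A : Fin n → Matrix (Fin n) (Fin n) ℝ) :
    mixedDiscMultilinear n A = mixedDisc n A := by
  simp only [mixedDiscMultilinear, mixedDisc, _root_.smul_apply, _root_.sum_apply, smul_eq_mul]
  congr 1
  refine sum_congr rfl fun σ _ => ?_
  rw [← det_transpose]
  rfl

theorem mixedDisc_vecMulVec_self {n : ℕ} (x : Fin n → Fin n → ℝ) :
    mixedDisc n (fun i => vecMulVec (x i) (x i)) = (n ! : ℝ)⁻¹ * (of x).det ^ 2 := by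
  have hσ (σ : Perm (Fin n)) : (of fun r j => vecMulVec (x (σ j)) (x (σ j)) r j).det
      = Perm.sign σ * (of x).det * ∏ j, x (σ j) j := by
    have : (of fun r j => vecMulVec (x (σ j)) (x (σ j)) r j)
        = (of x)ᵀ.submatrix id σ * diagonal fun j => x (σ j) j := by
      ext r j; simp [vecMulVec_apply]
    rw [this, det_mul, det_permute', det_transpose, det_diagonal]
  simp only [mixedDisc, hσ, sq, det_apply' (of x)]
  simp [mul_sum, mul_comm, mul_left_comm, mul_assoc]

theorem mixedDisc_transpose_mul_self {n : ℕ} (B : Fin n → Matrix (Fin n) (Fin n) ℝ) :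
    mixedDisc n (fun i => (B i)ᵀ * B i)
      = (n ! : ℝ)⁻¹ * ∑ g : Fin n → Fin n, (of fun i => B i (g i)).det ^ 2 := by
  simp_rw [transpose_mul_self_eq_sum_vecMulVec, ← mixedDiscMultilinear_apply,
    MultilinearMap.map_sum, mixedDiscMultilinear_apply, mixedDisc_vecMulVec_self, mul_sum]

theorem mixedDisc_transpose_mul_self_pos_iff {n : ℕ} (B : Fin n → Matrix (Fin n) (Fin n) ℝ) :
    0 < mixedDisc n (fun i => (B i)ᵀ * B i)
      ↔ ∃ g : Fin n → Fin n, LinearIndependent ℝ fun i => B i (g i) := by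
  simp only [mixedDisc_transpose_mul_self,
    mul_pos_iff_of_pos_left (by positivity : (0 : ℝ) < (n ! : ℝ)⁻¹),
    sum_pos_iff_of_nonneg fun g _ => sq_nonneg _, mem_univ, true_and, sq_pos_iff, ne_eq,
    ← isUnit_iff_ne_zero, ← isUnit_iff_isUnit_det, ← linearIndependent_rows_iff_isUnit]
  rfl

theorem mixedDisc_pos_iff_dim {n : ℕ} (A : Fin n → Matrix (Fin n) (Fin n) ℝ)
    (hA : ∀ i, (A i).PosSemidef) :
    0 < mixedDisc n A ↔
      ∀ s : Finset (Fin n), s.Nonempty →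
        s.card ≤ Module.finrank ℝ
          ↥(⨆ i ∈ s, LinearMap.range (Matrix.toLin' (A i))) := by
  classical
  choose B hB using fun i => (hA i).exists_eq_transpose_mul_self
  obtain rfl : A = fun i => (B i)ᵀ * B i := funext hB
  let rows i : Finset (Fin n → ℝ) := univ.image (B i).row
  have hrows : ∀ s : Finset (Fin n), ⨆ i ∈ s, LinearMap.range (toLin' ((B i)ᵀ * B i))
      = span ℝ (s.biUnion rows : Set (Fin n → ℝ)) := by
    intro s
    simp only [rows, range_toLin'_transpose_mul_self, coe_biUnion, coe_image, coe_univ,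
      Set.image_univ, span_iUnion₂, mem_coe]
  have htransversal : (∃ g : Fin n → Fin n, LinearIndependent ℝ fun i => B i (g i))
      ↔ RadoCondition ℝ rows := by
    rw [radoCondition_iff_exists_linearIndependent]
    constructor
    · rintro ⟨g, hg⟩
      exact ⟨_, fun i => mem_image_of_mem _ (mem_univ _), hg⟩
    · rintro ⟨v, hv, hli⟩
      choose g _ hg using fun i => mem_image.1 (hv i)
      exact ⟨g, by rwa [← funext hg] at hli⟩
  rw [mixedDisc_transpose_mul_self_pos_iff, htransversal]
  refine forall_congr' fun s => ?_
  rw [hrows]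
  rcases s.eq_empty_or_nonempty with rfl | hs
  · simp
  · simp [hs]
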